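/- Let G = (V,E) be a 2-connected finite simple graph satisfying |E| = 2(|V|−1) and |E(S)| = 2|S|−3 for every good flat S ⊆ V. Suppose {v_1, v_2} ⊆ V is a separating set and let H_1, …, H_n be the connected components of G∖{v_1, v_2}. Then: (1) n = 2; (2) there is no edge between v_1 and v_2 in G; (3) for every i, the induced subgraph G∖H_i (the subgraph induced on V minus the vertices of H_i) is 2-connected. -/

import Mathlib

open SimpleGraph
open scoped Pointwise

namespace Gor

/-! ### Graph-theoretic notions -/

/-- A graph is `2`-connected if it is connected and remains connected after deletion of any
single vertex.  A single edge `K₂` counts as `2`-connected. -/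
def IsTwoConnected {V : Type*} (G : SimpleGraph V) : Prop :=
  G.Connected ∧ ∀ v : V, (G.induce {u : V | u ≠ v}).Connected

/-- `E(S)`: the set of edges of `G` with both endpoints in `S`. -/
def edgesIn {V : Type*} (G : SimpleGraph V) (S : Set V) : Set (Sym2 V) :=
  {e ∈ G.edgeSet | ∀ v ∈ e, v ∈ S}

/-- The simple graph obtained from `G` by contracting all edges in `F`: its vertices are the
connected components of the graph with edge set `F`, two being adjacent if some edge of `G`
joins them. -/
def contractEdges {V : Type*} (G : SimpleGraph V) (F : Set (Sym2 V)) :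
    SimpleGraph (SimpleGraph.fromEdgeSet F).ConnectedComponent :=
  SimpleGraph.fromRel fun c d => ∃ u v : V, G.Adj u v ∧
    (SimpleGraph.fromEdgeSet F).connectedComponentMk u = c ∧
    (SimpleGraph.fromEdgeSet F).connectedComponentMk v = d

/-- `S` is a good flat of `G`: the induced subgraph `G[S]` is `2`-connected and the contraction
of all edges of `E(S)` in `G` is `2`-connected. -/
def IsGoodFlat {V : Type*} (G : SimpleGraph V) (S : Set V) : Prop :=
  IsTwoConnected (G.induce S) ∧ IsTwoConnected (contractEdges G (edgesIn G S))

/-- The weight function `w : E → {1, δ-1}` with `w e = 1` whenever `G∖e` is `2`-connected and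
`w e = δ - 1` whenever `G/e` is `2`-connected. -/
def IsCanonicalWeight {V : Type*} (G : SimpleGraph V) (δ : ℕ) (w : Sym2 V → ℕ) : Prop :=
  (∀ e ∈ G.edgeSet, w e = 1 ∨ w e = δ - 1) ∧
  (∀ e ∈ G.edgeSet, IsTwoConnected (G.deleteEdges {e}) → w e = 1) ∧
  (∀ e ∈ G.edgeSet, IsTwoConnected (contractEdges G {e}) → w e = δ - 1)

/-- A `2`-connected graph `G` satisfies `(♠)_δ` via the weight function `w`. -/
def SatisfiesSpade {V : Type*} (G : SimpleGraph V) (δ : ℕ) (w : Sym2 V → ℕ) : Prop :=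
  IsTwoConnected G ∧ IsCanonicalWeight G δ w ∧
  (∑ᶠ e ∈ G.edgeSet, w e) = δ * (Nat.card V - 1) ∧
  ∀ S : Set V, IsGoodFlat G S → (∑ᶠ e ∈ edgesIn G S, w e) + 1 = δ * (S.ncard - 1)

/-- The number of `2`-connected components (blocks) of a graph: the number of inclusion-maximal
vertex subsets inducing a `2`-connected subgraph. -/
noncomputable def numBlocks {V : Type*} (G : SimpleGraph V) : ℕ :=
  {S : Set V | IsTwoConnected (G.induce S) ∧
    ∀ T : Set V, S ⊆ T → IsTwoConnected (G.induce T) → S = T}.ncard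

/-! ### Lattice polytopes and the Gorenstein property -/

/-- A point of `ℝ^η` is a lattice point if all its coordinates are integers. -/
def IsLatticePoint {η : Type*} (x : η → ℝ) : Prop := ∀ i, ∃ z : ℤ, x i = z

/-- The cone over a polytope `P ⊆ ℝ^η`, living in `ℝ^η × ℝ`. -/
def coneOver {η : Type*} (P : Set (η → ℝ)) : Set ((η → ℝ) × ℝ) :=
  {y | ∃ t : ℝ, ∃ p ∈ P, 0 ≤ t ∧ y = (t • p, t)}

/-- The lattice affinely spanned by the lattice points of `P`, placed at height one;
i.e. the subgroup of `ℝ^η × ℝ` generated by `{(p, 1) : p a lattice point of P}`. -/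
def coneLattice {η : Type*} (P : Set (η → ℝ)) : Submodule ℤ ((η → ℝ) × ℝ) :=
  Submodule.span ℤ {y | ∃ p ∈ P, IsLatticePoint p ∧ y = (p, 1)}

/-- `h` is a linear form cutting out a facet-supporting hyperplane of the cone over `P`:
it is nonnegative on the cone and vanishes on a subset of the cone spanning one dimension less
than the cone itself. -/
def IsFacetForm {η : Type*} (P : Set (η → ℝ)) (h : ((η → ℝ) × ℝ) →ₗ[ℝ] ℝ) : Prop :=
  (∀ y ∈ coneOver P, 0 ≤ h y) ∧
  Module.finrank ℝ (Submodule.span ℝ {y ∈ coneOver P | h y = 0}) + 1 =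
    Module.finrank ℝ (Submodule.span ℝ (coneOver P))

/-- `h` is reduced with respect to the lattice spanned by `P`: it takes integer values on the
lattice and attains the value `1` there. -/
def IsReducedForm {η : Type*} (P : Set (η → ℝ)) (h : ((η → ℝ) × ℝ) →ₗ[ℝ] ℝ) : Prop :=
  (∀ y ∈ coneLattice P, ∃ z : ℤ, h y = z) ∧ ∃ y ∈ coneLattice P, h y = 1

/-- A polytope `P`, regarded as full-dimensional in the affine lattice it spans, is
`δ`-Gorenstein if there is a lattice point `v ∈ δP` with `h (v, δ) = 1` for the reduced
equation `h` of every facet-supporting hyperplane of the cone over `P`. -/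
def IsDeltaGorenstein {η : Type*} (P : Set (η → ℝ)) (δ : ℕ) : Prop :=
  ∃ v : η → ℝ, v ∈ (δ : ℝ) • P ∧ (v, (δ : ℝ)) ∈ coneLattice P ∧
    ∀ h : ((η → ℝ) × ℝ) →ₗ[ℝ] ℝ, IsFacetForm P h → IsReducedForm P h → h (v, (δ : ℝ)) = 1

/-- A polytope is Gorenstein if it is `δ`-Gorenstein for some positive integer `δ`. -/
def IsGorenstein {η : Type*} (P : Set (η → ℝ)) : Prop :=
  ∃ δ : ℕ, 0 < δ ∧ IsDeltaGorenstein P δ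

/-! ### Graphic matroids of simple graphs and their polytopes -/

/-- An independent set of the graphic matroid of `G`: a set of edges forming a forest. -/
def IsGraphicIndep {V : Type*} (G : SimpleGraph V) (I : Set (Sym2 V)) : Prop :=
  I ⊆ G.edgeSet ∧ (SimpleGraph.fromEdgeSet I).IsAcyclic

/-- A basis of the graphic matroid of `G`: a maximal forest (spanning forest). -/
def IsGraphicBasis {V : Type*} (G : SimpleGraph V) (B : Set (Sym2 V)) : Prop :=
  IsGraphicIndep G B ∧ ∀ e ∈ G.edgeSet, e ∉ B → ¬ IsGraphicIndep G (insert e B)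

/-- The base polytope `B(M(G))` of the graphic matroid of `G`: the convex hull of the
indicator vectors of the bases. -/
def basePolytope {V : Type*} (G : SimpleGraph V) : Set (Sym2 V → ℝ) :=
  convexHull ℝ {x | ∃ B : Set (Sym2 V), IsGraphicBasis G B ∧
    x = B.indicator fun _ => (1 : ℝ)}

/-- The base polytope `B(M(G))`, regarded inside `ℝ^E` where `E` is the edge set of `G`. -/
def basePolytopeE {V : Type*} (G : SimpleGraph V) : Set (↥G.edgeSet → ℝ) :=
  convexHull ℝ {x | ∃ B : Set (Sym2 V), IsGraphicBasis G B ∧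
    x = (Subtype.val ⁻¹' B).indicator fun _ => (1 : ℝ)}

/-- A homogeneous inequality `g x ≥ 0` is valid for `P` and defines a facet (a supporting
hyperplane whose intersection with `P` has affine dimension one less than `P`). -/
def IsSupportingFaceIneq {α : Type*} (P : Set (α → ℝ)) (g : (α → ℝ) → ℝ) : Prop :=
  (∀ x ∈ P, 0 ≤ g x) ∧
  Module.finrank ℝ (vectorSpan ℝ {x ∈ P | g x = 0}) + 1 =
    Module.finrank ℝ (vectorSpan ℝ P)

/-! ### Multigraphs -/

/-- A finite undirected loopless multigraph on a vertex type `V` with edge type `E`. -/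
structure Multigraph (V E : Type*) where
  ends : E → Sym2 V
  loopless : ∀ e, ¬ (ends e).IsDiag

/-- The underlying simple graph of a multigraph. -/
def Multigraph.toSimple {V E : Type*} (G : Multigraph V E) : SimpleGraph V :=
  SimpleGraph.fromEdgeSet (Set.range G.ends)

/-- `E(S)` for a multigraph: the set of edges with both endpoints in `S`. -/
def Multigraph.edgesIn {V E : Type*} (G : Multigraph V E) (S : Set V) : Set E :=
  {e | ∀ v ∈ G.ends e, v ∈ S}

/-- A set of edges of a multigraph is a forest (an independent set of the graphic matroid):
no two parallel edges and no cycle. -/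
def IsMultiForest {V E : Type*} (G : Multigraph V E) (I : Set E) : Prop :=
  Set.InjOn G.ends I ∧ (SimpleGraph.fromEdgeSet (G.ends '' I)).IsAcyclic

/-- The independence polytope `P(M(G))` of the graphic matroid of a multigraph `G`. -/
def multiIndepPolytope {V E : Type*} (G : Multigraph V E) : Set (E → ℝ) :=
  convexHull ℝ {x | ∃ I : Set E, IsMultiForest G I ∧ x = I.indicator fun _ => (1 : ℝ)}

/-- The rank of a set of edges in the graphic matroid of a multigraph. -/
noncomputable def mrank {V E : Type*} (G : Multigraph V E) (A : Set E) : ℕ :=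
  sSup {n | ∃ I ⊆ A, IsMultiForest G I ∧ I.ncard = n}

/-- A flat of the graphic matroid of a multigraph: adding any further edge increases the rank. -/
def IsGraphicFlat {V E : Type*} (G : Multigraph V E) (A : Set E) : Prop :=
  ∀ e : E, e ∉ A → mrank G (insert e A) ≠ mrank G A

/-- A circuit of the graphic matroid of a multigraph: a minimal dependent set of edges. -/
def IsMultiCircuit {V E : Type*} (G : Multigraph V E) (C : Set E) : Prop :=
  ¬ IsMultiForest G C ∧ ∀ C' ⊂ C, IsMultiForest G C'

/-- The restriction of the graphic matroid of `G` to `A` is a connected matroid: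
`A` is nonempty and any two distinct elements of `A` lie on a common circuit inside `A`. -/
def ConnectedRestriction {V E : Type*} (G : Multigraph V E) (A : Set E) : Prop :=
  A.Nonempty ∧ ∀ e ∈ A, ∀ f ∈ A, e ≠ f → ∃ C ⊆ A, IsMultiCircuit G C ∧ e ∈ C ∧ f ∈ C

/-- `G` is the `m`-blow-up of the simple graph `H`: every edge of `H` is replaced by exactly
`m` parallel edges and there are no other edges. -/
def IsBlowUp {V E : Type*} (G : Multigraph V E) (m : ℕ) (H : SimpleGraph V) : Prop :=
  (∀ p ∈ H.edgeSet, {e : E | G.ends e = p}.ncard = m) ∧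
  ∀ p : Sym2 V, p ∉ H.edgeSet → {e : E | G.ends e = p} = ∅

/-- The condition `(♣)_δ`: `(δ-1)|E(S)| + 1 = δ(|S|-1)` for every vertex subset `S` inducing a
`2`-connected subgraph. -/
def ClubCond {V : Type*} (H : SimpleGraph V) (δ : ℕ) : Prop :=
  ∀ S : Set V, IsTwoConnected (H.induce S) →
    (δ - 1) * (edgesIn H S).ncard + 1 = δ * (S.ncard - 1)

/-! ### Chordality, `K₄` minors, cycle attachments -/

/-- A chordless cycle: a cycle such that every edge of `G` between vertices of the cycle is an
edge of the cycle. -/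
def IsChordlessCycle {V : Type*} (G : SimpleGraph V) {v : V} (c : G.Walk v v) : Prop :=
  c.IsCycle ∧ ∀ e ∈ edgesIn G {u : V | u ∈ c.support}, e ∈ c.edges

/-- `G` is `δ`-chordal: every cycle without a chord has exactly `δ + 1` edges. -/
def IsDeltaChordal {V : Type*} (G : SimpleGraph V) (δ : ℕ) : Prop :=
  ∀ (v : V) (c : G.Walk v v), IsChordlessCycle G c → c.length = δ + 1

/-- `G` has a `K₄` minor: there are four disjoint nonempty connected branch sets pairwise
joined by an edge. -/
def HasK4Minor {V : Type*} (G : SimpleGraph V) : Prop :=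
  ∃ B : Fin 4 → Set V, (∀ i, (B i).Nonempty) ∧ (∀ i, (G.induce (B i)).Connected) ∧
    (Pairwise fun i j => Disjoint (B i) (B j)) ∧
    (Pairwise fun i j => ∃ u ∈ B i, ∃ v ∈ B j, G.Adj u v)

/-- One step of attaching a new `(δ+1)`-cycle to an edge: `B` is obtained from `A` by adding
`δ - 1` new vertices forming a path of length `δ` between the endpoints of an edge of
`H[A]`, these being all new edges. -/
def AttachStep {V : Type*} (H : SimpleGraph V) (δ : ℕ) (A B : Set V) : Prop :=
  ∃ q : Fin (δ + 1) → V, Function.Injective q ∧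
    H.Adj (q 0) (q (Fin.last δ)) ∧ q 0 ∈ A ∧ q (Fin.last δ) ∈ A ∧
    (∀ i : Fin (δ + 1), i ≠ 0 → i ≠ Fin.last δ → q i ∉ A) ∧
    B = A ∪ {x | ∃ i : Fin (δ + 1), i ≠ 0 ∧ i ≠ Fin.last δ ∧ q i = x} ∧
    edgesIn H B = edgesIn H A ∪ {e | ∃ i : Fin δ, e = s(q i.castSucc, q i.succ)}

/-- `H` can be constructed from the clique `K₂` by repeatedly attaching new `(δ+1)`-cycles to
edges of the preceding graph. -/
def ConstructibleFromK2 {V : Type*} (H : SimpleGraph V) (δ : ℕ) : Prop :=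
  ∃ (k : ℕ) (S : Fin (k + 1) → Set V),
    (∃ u v : V, H.Adj u v ∧ S 0 = {u, v}) ∧
    S (Fin.last k) = Set.univ ∧
    ∀ i : Fin k, AttachStep H δ (S i.castSucc) (S i.succ)

/-! ### Gluings, subdivisions, collisions, ears -/

/-- `G` (with distinguished edge `ab`) is the gluing of the graphs `Gs i` along the edges
`es i`: the disjoint union with all the edges `es i` identified to the single edge `ab`. -/
def IsGluing {ι : Type*} {Vf : ι → Type*} {W : Type*} (Gs : ∀ i, SimpleGraph (Vf i))
    (es : ∀ i, Sym2 (Vf i)) (G : SimpleGraph W) (a b : W) : Prop :=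
  a ≠ b ∧ G.Adj a b ∧
  ∃ φ : ∀ i, Vf i → W,
    (∀ i, Function.Injective (φ i)) ∧
    (∀ x : W, ∃ i, x ∈ Set.range (φ i)) ∧
    (∀ i, Sym2.map (φ i) (es i) = s(a, b)) ∧
    (∀ i j, i ≠ j → Set.range (φ i) ∩ Set.range (φ j) = {a, b}) ∧
    ∀ x y : W, G.Adj x y ↔ ∃ i, ∃ u v, (Gs i).Adj u v ∧ φ i u = x ∧ φ i v = y

/-- `G'` together with the path `q` is the subdivision of `G` obtained by replacing the edge
`uv` by a path of `m` edges `q 0, …, q m` through new vertices. -/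
def IsSubdivisionAt {V W : Type*} (G : SimpleGraph V) (u v : V) {m : ℕ}
    (G' : SimpleGraph W) (q : Fin (m + 1) → W) : Prop :=
  ∃ φ : V → W, Function.Injective φ ∧ Function.Injective q ∧
    q 0 = φ u ∧ q (Fin.last m) = φ v ∧
    (∀ i : Fin (m + 1), i ≠ 0 → i ≠ Fin.last m → q i ∉ Set.range φ) ∧
    (∀ x : W, x ∈ Set.range φ ∨ x ∈ Set.range q) ∧
    ∀ x y : W, G'.Adj x y ↔
      ((∃ a b : V, G.Adj a b ∧ s(a, b) ≠ s(u, v) ∧ φ a = x ∧ φ b = y) ∨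
       ∃ i : Fin m, s(x, y) = s(q i.castSucc, q i.succ))

/-- `G` (with the distinguished nonadjacent pair `a b`) is the collision of `G₁` and `G₂` on
the edges `e₁, e₂`: the disjoint union with `e₁` and `e₂` identified and then deleted. -/
def IsCollision {V₁ V₂ W : Type*} (G₁ : SimpleGraph V₁) (G₂ : SimpleGraph V₂)
    (e₁ : Sym2 V₁) (e₂ : Sym2 V₂) (G : SimpleGraph W) (a b : W) : Prop :=
  a ≠ b ∧ ¬ G.Adj a b ∧
  ∃ (φ₁ : V₁ → W) (φ₂ : V₂ → W),
    Function.Injective φ₁ ∧ Function.Injective φ₂ ∧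
    Sym2.map φ₁ e₁ = s(a, b) ∧ Sym2.map φ₂ e₂ = s(a, b) ∧
    (∀ x : W, x ∈ Set.range φ₁ ∨ x ∈ Set.range φ₂) ∧
    Set.range φ₁ ∩ Set.range φ₂ = {a, b} ∧
    ∀ x y : W, G.Adj x y ↔
      ((∃ u v, G₁.Adj u v ∧ s(u, v) ≠ e₁ ∧ φ₁ u = x ∧ φ₁ v = y) ∨
       (∃ u v, G₂.Adj u v ∧ s(u, v) ≠ e₂ ∧ φ₂ u = x ∧ φ₂ v = y))

/-- The inner vertices of an ear. -/
def earInner {V : Type*} {s : ℕ} (p : Fin (s + 1) → V) : Set V :=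
  {x | ∃ i : Fin (s + 1), i ≠ 0 ∧ i ≠ Fin.last s ∧ p i = x}

/-- The edges of an ear. -/
def earEdges {V : Type*} {s : ℕ} (p : Fin (s + 1) → V) : Set (Sym2 V) :=
  {e | ∃ i : Fin s, e = s(p i.castSucc, p i.succ)}

/-- An `s`-ear of `G`: a path with `s` edges whose inner vertices have degree `2` in `G`. -/
def IsEar {V : Type*} (G : SimpleGraph V) {s : ℕ} (p : Fin (s + 1) → V) : Prop :=
  Function.Injective p ∧ (∀ i : Fin s, G.Adj (p i.castSucc) (p i.succ)) ∧
  ∀ i : Fin (s + 1), i ≠ 0 → i ≠ Fin.last s → (G.neighborSet (p i)).ncard = 2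

/-- `T` is the vertex set of an inclusion-maximal proper `2`-connected induced subgraph. -/
def IsMaxProperTwoConnected {V : Type*} (G : SimpleGraph V) (T : Set V) : Prop :=
  IsTwoConnected (G.induce T) ∧ T ≠ Set.univ ∧
  ∀ T' : Set V, T ⊆ T' → T' ≠ Set.univ → IsTwoConnected (G.induce T') → T' = T

/-! ### `(♠)₂` and `3`-connectivity -/

/-- A `2`-connected graph satisfies the equalities `(♠)₂`:
`|E| = 2(|V|-1)` and `|E(S)| = 2|S| - 3` for every good flat `S`. -/
def Spade2 {V : Type*} (G : SimpleGraph V) : Prop :=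
  IsTwoConnected G ∧ G.edgeSet.ncard = 2 * (Nat.card V - 1) ∧
  ∀ S : Set V, IsGoodFlat G S → (edgesIn G S).ncard = 2 * S.ncard - 3

/-- A graph is `3`-connected if it has more than `3` vertices and remains connected after
deletion of any two vertices. -/
def IsThreeConnected {V : Type*} (G : SimpleGraph V) : Prop :=
  3 < Nat.card V ∧ ∀ u v : V, (G.induce {x : V | x ≠ u ∧ x ≠ v}).Connected

/-! ### Inductive constructions -/

/-- Graphs obtainable from the `δ`-cycle by gluings (Proposition `construction1`) and
`(δ-1)`-subdivisions (Proposition `construction2`). -/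
inductive Obtainable (δ : ℕ) : {W : Type} → SimpleGraph W → Prop
  | cycle {W : Type} (G : SimpleGraph W) (e : G ≃g SimpleGraph.cycleGraph δ) :
      Obtainable δ G
  | glue {Vf : Fin (δ - 1) → Type} {W : Type}
      (Gs : ∀ i, SimpleGraph (Vf i)) (ws : ∀ i, Sym2 (Vf i) → ℕ) (es : ∀ i, Sym2 (Vf i))
      (G : SimpleGraph W) (a b : W)
      (hob : ∀ i, Obtainable δ (Gs i))
      (hsp : ∀ i, SatisfiesSpade (Gs i) δ (ws i))
      (hes : ∀ i, es i ∈ (Gs i).edgeSet)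
      (hwe : ∀ i, ws i (es i) = δ - 1)
      (hgl : IsGluing Gs es G a b) : Obtainable δ G
  | subdivide {V W : Type} (G : SimpleGraph V) (w : Sym2 V → ℕ) (u v : V)
      (G' : SimpleGraph W) (q : Fin (δ - 1 + 1) → W)
      (hob : Obtainable δ G) (hsp : SatisfiesSpade G δ w)
      (huv : G.Adj u v) (hw1 : w s(u, v) = 1)
      (hsub : IsSubdivisionAt G u v G' q) : Obtainable δ G'

/-- Graphs obtainable from the clique `K₄` by a finite sequence of collisions. -/
inductive ObtainableK4 : {W : Type} → SimpleGraph W → Prop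
  | k4 {W : Type} (G : SimpleGraph W) (e : G ≃g (⊤ : SimpleGraph (Fin 4))) :
      ObtainableK4 G
  | collide {V₁ V₂ W : Type} (G₁ : SimpleGraph V₁) (G₂ : SimpleGraph V₂)
      (e₁ : Sym2 V₁) (e₂ : Sym2 V₂) (G : SimpleGraph W) (a b : W)
      (h₁ : ObtainableK4 G₁) (h₂ : ObtainableK4 G₂)
      (he₁ : e₁ ∈ G₁.edgeSet) (he₂ : e₂ ∈ G₂.edgeSet)
      (hc : IsCollision G₁ G₂ e₁ e₂ G a b) : ObtainableK4 G


/-! If `G - {v₁, v₂}` had three components, the complement of each component `H` would be a good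
flat, so exactly `2|H| + 1` edges would meet `H`; summing over all components gives more than
`|E| = 2(|V| - 1)` edges. With two components `H₁, H₂`, each side `S = V ∖ Hᵢ` satisfies
`|E(S)| ≤ 2|S| - 3`, and even `|E(S)| ≤ 2|S| - 4` unless `G[S]` is `2`-connected: by induction
on `|S|`, a `2`-connected `G[S]` is a good flat, while a cut vertex `u` of `G[S]` splits `S` into
two smaller sides that share only `u`. The two sides share just `v₁, v₂`, so their bounds add up
to exactly `|E|`: there is no room for the edge `v₁v₂` or for a side that is not `2`-connected. -/

section Reachability

variable {V : Type*} {G : SimpleGraph V} {A B : Set V} {x y z : V}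

def ReachableIn (G : SimpleGraph V) (A : Set V) (x y : V) : Prop :=
  ∃ (hx : x ∈ A) (hy : y ∈ A), (G.induce A).Reachable ⟨x, hx⟩ ⟨y, hy⟩

namespace ReachableIn

lemma left_mem (h : ReachableIn G A x y) : x ∈ A := h.1

lemma right_mem (h : ReachableIn G A x y) : y ∈ A := h.2.1

lemma refl (hx : x ∈ A) : ReachableIn G A x x := ⟨hx, hx, .rfl⟩

lemma symm (h : ReachableIn G A x y) : ReachableIn G A y x :=
  let ⟨hx, hy, h⟩ := h; ⟨hy, hx, h.symm⟩

lemma trans (h : ReachableIn G A x y) (h' : ReachableIn G A y z) : ReachableIn G A x z :=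
  let ⟨hx, _, h⟩ := h; let ⟨_, hz, h'⟩ := h'; ⟨hx, hz, h.trans h'⟩

lemma of_adj (hx : x ∈ A) (hy : y ∈ A) (h : G.Adj x y) : ReachableIn G A x y :=
  ⟨hx, hy, (show (G.induce A).Adj ⟨x, hx⟩ ⟨y, hy⟩ from h).reachable⟩

lemma mono (hAB : A ⊆ B) (h : ReachableIn G A x y) : ReachableIn G B x y :=
  let ⟨hx, hy, h⟩ := h; ⟨hAB hx, hAB hy, h.map (G.induceHomOfLE hAB).toHom⟩

lemma mem_of_closed {C : Set V} (hC : ∀ v ∈ C, ∀ w ∈ A, G.Adj v w → w ∈ C) (hx : x ∈ C)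
    (h : ReachableIn G A x y) : y ∈ C := by
  obtain ⟨_, _, ⟨p⟩⟩ := h
  suffices ∀ {u w : A} (p : (G.induce A).Walk u w), (u : V) ∈ C → (w : V) ∈ C from this p hx
  intro u w p
  induction p with
  | nil => exact id
  | cons hadj _ ih => exact fun hu => ih (hC _ hu _ (Subtype.property _) hadj)

lemma exists_adj_of_notMem (hx : x ∈ B) (hy : y ∉ B) (h : ReachableIn G A x y) :
    ∃ v w, ReachableIn G B x v ∧ w ∈ A ∧ w ∉ B ∧ G.Adj v w := by
  by_contra! hno
  refine hy (mem_of_closed (C := {v | ReachableIn G B x v}) (fun v hv w hwA hvw => ?_)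
    (refl hx) h).right_mem
  by_cases hwB : w ∈ B
  · exact hv.trans (of_adj hv.right_mem hwB hvw)
  · exact absurd hvw (hno v w hv hwA hwB)

lemma setOf_reachableIn (h : ReachableIn G A x y) :
    ReachableIn G {v | ReachableIn G A v y} x y := by
  obtain ⟨_, _, ⟨p⟩⟩ := h
  suffices ∀ {u w : A} (p : (G.induce A).Walk u w), ReachableIn G {v | ReachableIn G A v w} u w
    from this p
  intro u w p
  induction p with
  | nil => exact refl (refl (Subtype.property _))
  | cons hadj p ih =>
    have hu : ReachableIn G A _ _ :=
      ⟨Subtype.property _, Subtype.property _, hadj.reachable.trans p.reachable⟩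
    exact (of_adj (A := {v | ReachableIn G A v _}) hu ih.left_mem hadj).trans ih

end ReachableIn

lemma _root_.SimpleGraph.Connected.reachableIn (h : (G.induce A).Connected) (hx : x ∈ A)
    (hy : y ∈ A) : ReachableIn G A x y :=
  ⟨hx, hy, h.preconnected _ _⟩

lemma connected_induce_of_forall_reachableIn (hy : y ∈ A) (h : ∀ x ∈ A, ReachableIn G A x y) :
    (G.induce A).Connected := by
  rw [connected_iff_exists_forall_reachable]
  exact ⟨⟨y, hy⟩, fun x => (h x x.2).2.2.symm⟩

lemma connected_induce_setOf_reachableIn (hy : y ∈ A) :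
    (G.induce {x | ReachableIn G A x y}).Connected :=
  connected_induce_of_forall_reachableIn (A := {x | ReachableIn G A x y}) (ReachableIn.refl hy)
    fun _ hx => ReachableIn.setOf_reachableIn hx

lemma connected_induce_of_reachableIn_or {a b : V} (hab : ReachableIn G A a b)
    (h : ∀ x ∈ A, ReachableIn G A x a ∨ ReachableIn G A x b) : (G.induce A).Connected :=
  connected_induce_of_forall_reachableIn hab.left_mem fun x hx =>
    (h x hx).elim id fun hxb => hxb.trans hab.symm

lemma isTwoConnected_induce_iff :
    IsTwoConnected (G.induce A) ↔
      (G.induce A).Connected ∧ ∀ u ∈ A, (G.induce (A \ {u})).Connected := by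
  have key (u : A) : ((G.induce A).induce {w | w ≠ u}).Connected ↔
      (G.induce (A \ {(u : V)})).Connected :=
    Iso.connected_iff
      { toFun w := ⟨w.1.1, w.1.2, fun h => w.2 (Subtype.ext h)⟩
        invFun w := ⟨⟨w.1, w.2.1⟩, fun h => w.2.2 (congrArg Subtype.val h)⟩
        map_rel_iff' := Iff.rfl }
  exact and_congr_right' ⟨fun h u hu => (key ⟨u, hu⟩).1 (h _), fun h u => (key u).2 (h u u.2)⟩

end Reachability

section Image

variable {V W : Type*} {G : SimpleGraph V} {G' : SimpleGraph W} {f : V → W}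

lemma _root_.SimpleGraph.Reachable.map_of_eq_or_adj
    (hf : ∀ u v, G.Adj u v → f u = f v ∨ G'.Adj (f u) (f v)) {u v : V} (h : G.Reachable u v) :
    G'.Reachable (f u) (f v) := by
  obtain ⟨p⟩ := h
  induction p with
  | nil => rfl
  | cons hadj _ ih =>
    rcases hf _ _ hadj with heq | hadj'
    · exact heq ▸ ih
    · exact hadj'.reachable.trans ih

lemma _root_.SimpleGraph.Connected.induce_image_of_eq_or_adj
    (hf : ∀ u v, G.Adj u v → f u = f v ∨ G'.Adj (f u) (f v)) {A : Set V}
    (hA : (G.induce A).Connected) : (G'.induce (f '' A)).Connected := by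
  obtain ⟨x⟩ := hA.nonempty
  have : Nonempty (f '' A) := ⟨⟨f x, Set.mem_image_of_mem f x.2⟩⟩
  refine ⟨?_⟩
  rintro ⟨_, x, hx, rfl⟩ ⟨_, y, hy, rfl⟩
  refine Reachable.map_of_eq_or_adj (G := G.induce A) (G' := G'.induce (f '' A))
    (f := fun v => ⟨f v, Set.mem_image_of_mem f v.2⟩) (fun u v huv => ?_)
    (hA.preconnected ⟨x, hx⟩ ⟨y, hy⟩)
  rcases hf _ _ huv with heq | hadj
  · exact .inl (Subtype.ext heq)
  · exact .inr hadj

end Image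

section Contraction

variable {V : Type*} {G : SimpleGraph V} {S : Set V}

abbrev contractMk (F : Set (Sym2 V)) : V → (SimpleGraph.fromEdgeSet F).ConnectedComponent :=
  (SimpleGraph.fromEdgeSet F).connectedComponentMk

lemma eq_or_adj_contractEdges {u v : V} (h : G.Adj u v) :
    contractMk (edgesIn G S) u = contractMk (edgesIn G S) v ∨
      (contractEdges G (edgesIn G S)).Adj (contractMk (edgesIn G S) u)
        (contractMk (edgesIn G S) v) := by
  rw [contractEdges, SimpleGraph.fromRel_adj, or_iff_not_imp_left]
  exact fun hne => ⟨hne, .inl ⟨u, v, h, rfl, rfl⟩⟩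

lemma contractMk_edgesIn_eq_iff {x y : V} (hx : x ∉ S) :
    contractMk (edgesIn G S) y = contractMk (edgesIn G S) x ↔ y = x := by
  refine ⟨fun h => ?_, fun h => h ▸ rfl⟩
  obtain ⟨p⟩ := (ConnectedComponent.exact h).symm
  cases p with
  | nil => rfl
  | cons hadj _ =>
    rw [SimpleGraph.fromEdgeSet_adj] at hadj
    exact absurd (hadj.1.2 x (Sym2.mem_mk_left _ _)) hx

lemma contractMk_edgesIn_eq (hS : (G.induce S).Connected) {x y : V} (hx : x ∈ S) (hy : y ∈ S) :
    contractMk (edgesIn G S) x = contractMk (edgesIn G S) y := by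
  refine ConnectedComponent.sound (Reachable.map_of_eq_or_adj (G := G.induce S)
    (f := Subtype.val) (fun u v huv => .inr ?_) (hS.preconnected ⟨x, hx⟩ ⟨y, hy⟩))
  rw [SimpleGraph.fromEdgeSet_adj]
  refine ⟨⟨huv, ?_⟩, fun h => huv.ne (Subtype.ext h)⟩
  rintro w hw
  rcases Sym2.mem_iff.1 hw with rfl | rfl
  exacts [u.2, v.2]

lemma setOf_ne_contractMk_of_mem (hS : (G.induce S).Connected) {x : V} (hx : x ∈ S) :
    {d | d ≠ contractMk (edgesIn G S) x} = contractMk (edgesIn G S) '' Sᶜ := by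
  ext d
  induction d using ConnectedComponent.ind with | h y => ?_
  refine ⟨fun hy => ⟨y, fun hyS => hy (contractMk_edgesIn_eq hS hyS hx), rfl⟩, ?_⟩
  rintro ⟨z, hz, hzy⟩ hyx
  exact hz (((contractMk_edgesIn_eq_iff hz).1 (hzy.trans hyx).symm) ▸ hx)

lemma setOf_ne_contractMk_of_notMem {x : V} (hx : x ∉ S) :
    {d | d ≠ contractMk (edgesIn G S) x} = contractMk (edgesIn G S) '' {v | v ≠ x} := by
  ext d
  induction d using ConnectedComponent.ind with | h y => ?_
  refine ⟨fun hy => ⟨y, fun hyx => hy (hyx ▸ rfl), rfl⟩, ?_⟩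
  rintro ⟨z, hz, hzy⟩ hyx
  exact hz ((contractMk_edgesIn_eq_iff hx).1 (hzy.trans hyx))

/-- The classes of the contraction are `S` and the singletons outside `S`, so deleting one of them
leaves the image of `G[Sᶜ]` or of `G - x`. -/
theorem isTwoConnected_contractEdges (hG : IsTwoConnected G) (hS : (G.induce S).Connected)
    (hSc : (G.induce Sᶜ).Connected) : IsTwoConnected (contractEdges G (edgesIn G S)) := by
  have hf := fun u v (h : G.Adj u v) => eq_or_adj_contractEdges (S := S) h
  refine ⟨?_, fun c => ?_⟩
  · have : Nonempty (SimpleGraph.fromEdgeSet (edgesIn G S)).ConnectedComponent :=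
      hG.1.nonempty.map (contractMk (edgesIn G S))
    refine ⟨fun c d => ?_⟩
    induction c using ConnectedComponent.ind
    induction d using ConnectedComponent.ind
    exact Reachable.map_of_eq_or_adj hf (hG.1.preconnected _ _)
  induction c using ConnectedComponent.ind with | h x => ?_
  by_cases hx : x ∈ S
  · rw [setOf_ne_contractMk_of_mem hS hx]
    exact Connected.induce_image_of_eq_or_adj hf hSc
  · rw [setOf_ne_contractMk_of_notMem hx]
    exact Connected.induce_image_of_eq_or_adj hf (hG.2 x)

theorem isGoodFlat_of_isTwoConnected_induce (hG : IsTwoConnected G)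
    (hS : IsTwoConnected (G.induce S)) (hSc : (G.induce Sᶜ).Connected) : IsGoodFlat G S :=
  ⟨hS, isTwoConnected_contractEdges hG hS.1 hSc⟩

end Contraction

section Side

variable {V : Type*} {G : SimpleGraph V} {S : Set V} {a b u x : V}

lemma mem_edgesIn_mk {x y : V} : s(x, y) ∈ edgesIn G S ↔ G.Adj x y ∧ x ∈ S ∧ y ∈ S := by
  simp [edgesIn]

lemma edgesIn_union_subset {X Y : Set V} (h : ∀ x ∈ X, ∀ y ∈ Y, G.Adj x y → x ∈ Y ∨ y ∈ X) :
    edgesIn G (X ∪ Y) ⊆ edgesIn G X ∪ edgesIn G Y := by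
  intro e he
  induction e using Sym2.ind with | _ x y => ?_
  simp only [Set.mem_union, mem_edgesIn_mk] at he ⊢
  obtain ⟨hxy, hx | hx, hy | hy⟩ := he
  · exact .inl ⟨hxy, hx, hy⟩
  · rcases h x hx y hy hxy with h' | h'
    exacts [.inr ⟨hxy, h', hy⟩, .inl ⟨hxy, hx, h'⟩]
  · rcases h y hy x hx hxy.symm with h' | h'
    exacts [.inr ⟨hxy, hx, h'⟩, .inl ⟨hxy, h', hy⟩]
  · exact .inr ⟨hxy, hx, hy⟩

/-- Models `V ∖ H` for a component `H` of `G - {a, b}`. -/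
structure IsSide (G : SimpleGraph V) (a b : V) (S : Set V) : Prop where
  ne : a ≠ b
  left_mem : a ∈ S
  right_mem : b ∈ S
  connected_compl : (G.induce Sᶜ).Connected
  eq_or_eq_of_adj : ∀ x ∈ S, ∀ y ∉ S, G.Adj x y → x = a ∨ x = b

def petal (G : SimpleGraph V) (S : Set V) (u a : V) : Set V :=
  insert u {x | ReachableIn G (S \ {u}) x a}

namespace IsSide

lemma symm (h : IsSide G a b S) : IsSide G b a S :=
  ⟨h.ne.symm, h.right_mem, h.left_mem, h.connected_compl,
    fun x hx y hy hxy => (h.eq_or_eq_of_adj x hx y hy hxy).symm⟩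

/-- In `G - z`, a walk from `x` into the connected rest `Sᶜ` must leave `S` through `a` or `b`. -/
lemma reachableIn_diff (hG : IsTwoConnected G) (hS : IsSide G a b S) {z : V} (hz : z ∈ S)
    (hx : x ∈ S) (hxz : x ≠ z) :
    ReachableIn G (S \ {z}) x a ∨ ReachableIn G (S \ {z}) x b := by
  obtain ⟨⟨y, hy⟩⟩ := hS.connected_compl.nonempty
  obtain ⟨v, w, hxv, hwz, hwS, hvw⟩ :=
    ((hG.2 z).reachableIn (x := x) (y := y) hxz fun h => hy (h ▸ hz)).exists_adj_of_notMem
      (B := S \ {z}) ⟨hx, hxz⟩ fun h => hy h.1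
  rcases hS.eq_or_eq_of_adj v hxv.right_mem.1 w (fun h => hwS ⟨h, hwz⟩) hvw with rfl | rfl
  exacts [.inl hxv, .inr hxv]

lemma reachableIn_or (hG : IsTwoConnected G) (hS : IsSide G a b S) (hx : x ∈ S) :
    ReachableIn G S x a ∨ ReachableIn G S x b := by
  obtain rfl | hxa := eq_or_ne x a
  · exact .inl (.refl hx)
  exact (hS.reachableIn_diff hG hS.left_mem hx hxa).imp (.mono Set.sdiff_subset)
    (.mono Set.sdiff_subset)

lemma connected_induce_diff_left (hG : IsTwoConnected G) (hS : IsSide G a b S) :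
    (G.induce (S \ {a})).Connected :=
  connected_induce_of_forall_reachableIn ⟨hS.right_mem, hS.ne.symm⟩ fun _ hx =>
    (hS.reachableIn_diff hG hS.left_mem hx.1 hx.2).resolve_left fun h => h.right_mem.2 rfl

lemma connected_induce_of_reachableIn (hG : IsTwoConnected G) (hS : IsSide G a b S)
    (hab : ReachableIn G S a b) : (G.induce S).Connected :=
  connected_induce_of_reachableIn_or hab fun _ hx => hS.reachableIn_or hG hx

lemma reachableIn_of_mem (hG : IsTwoConnected G) (hS : IsSide G a b S) (hu : u ∈ S)
    (hua : u ≠ a) (hub : u ≠ b) : ReachableIn G S a b :=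
  have hb := (hS.reachableIn_diff hG hS.left_mem hu hua).resolve_left fun h => h.right_mem.2 rfl
  have ha := (hS.symm.reachableIn_diff hG hS.right_mem hu hub).resolve_left
    fun h => h.right_mem.2 rfl
  (ha.mono Set.sdiff_subset).symm.trans (hb.mono Set.sdiff_subset)

lemma exists_adj_compl (hG : IsTwoConnected G) (hS : IsSide G a b S) (hu : u ∈ S)
    (hua : u ≠ a) : ∃ w ∉ S, G.Adj b w := by
  obtain ⟨⟨y, hy⟩⟩ := hS.connected_compl.nonempty
  have hya : y ≠ a := fun h => hy (h ▸ hS.left_mem)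
  obtain ⟨v, w, hyv, hwa, hwS, hvw⟩ := ((hG.2 a).reachableIn (x := y) (y := u) hya hua)
    |>.exists_adj_of_notMem (B := Sᶜ) hy (not_not.2 hu)
  rcases hS.eq_or_eq_of_adj w (not_not.1 hwS) v hyv.right_mem hvw.symm with rfl | rfl
  exacts [absurd rfl hwa, ⟨v, hyv.right_mem, hvw.symm⟩]

lemma edgesIn_eq_empty (hG : IsTwoConnected G) (hS : IsSide G a b S)
    (h : ¬ (G.induce S).Connected) : edgesIn G S = ∅ := by
  refine Set.eq_empty_of_forall_notMem fun e he => h (hS.connected_induce_of_reachableIn hG ?_)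
  induction e using Sym2.ind with | _ x y => ?_
  obtain ⟨hxy, hx, hy⟩ := mem_edgesIn_mk.1 he
  by_cases hx' : x ≠ a ∧ x ≠ b
  · exact hS.reachableIn_of_mem hG hx hx'.1 hx'.2
  by_cases hy' : y ≠ a ∧ y ≠ b
  · exact hS.reachableIn_of_mem hG hy hy'.1 hy'.2
  have hab := hS.ne
  have hne := hxy.ne
  obtain ⟨rfl, rfl⟩ | ⟨rfl, rfl⟩ : x = a ∧ y = b ∨ x = b ∧ y = a := by grind
  exacts [.of_adj hx hy hxy, .of_adj hy hx hxy.symm]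

lemma not_reachableIn_of_not_connected (hG : IsTwoConnected G) (hS : IsSide G a b S)
    (hu : u ∈ S) (hcut : ¬ (G.induce (S \ {u})).Connected) :
    ¬ ReachableIn G (S \ {u}) b a := fun hba =>
  hcut <| connected_induce_of_reachableIn_or hba.symm fun _ hx =>
    hS.reachableIn_diff hG hu hx.1 hx.2

lemma compl_petal (hG : IsTwoConnected G) (hS : IsSide G a b S) (hu : u ∈ S)
    (hcut : ¬ (G.induce (S \ {u})).Connected) :
    (petal G S u a)ᶜ = {x | ReachableIn G (S \ {u}) x b} ∪ Sᶜ := by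
  have hba := hS.not_reachableIn_of_not_connected hG hu hcut
  ext x
  simp only [petal, Set.mem_compl_iff, Set.mem_insert_iff, Set.mem_union, Set.mem_ofPred_eq,
    not_or]
  constructor
  · rintro ⟨hxu, hxa⟩
    by_cases hxS : x ∈ S
    · exact .inl ((hS.reachableIn_diff hG hu hxS hxu).resolve_left hxa)
    · exact .inr hxS
  · rintro (hxb | hxS)
    · exact ⟨hxb.left_mem.2, fun hxa => hba (hxb.symm.trans hxa)⟩
    · exact ⟨fun h => hxS (h ▸ hu), fun hxa => hxS hxa.left_mem.1⟩

lemma isSide_petal (hG : IsTwoConnected G) (hS : IsSide G a b S) (hu : u ∈ S) (hua : u ≠ a)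
    (hub : u ≠ b) (hcut : ¬ (G.induce (S \ {u})).Connected) : IsSide G a u (petal G S u a) where
  ne := hua.symm
  left_mem := .inr (.refl ⟨hS.left_mem, hua.symm⟩)
  right_mem := Set.mem_insert _ _
  connected_compl := by
    rw [hS.compl_petal hG hu hcut]
    obtain ⟨w, hwS, hbw⟩ := hS.exists_adj_compl hG hu hua
    have hb : b ∈ S \ {u} := ⟨hS.right_mem, hub.symm⟩
    exact connected_induce_union (connected_induce_setOf_reachableIn hb).preconnected
      hS.connected_compl.preconnected (ReachableIn.refl hb) hwS hbw
  eq_or_eq_of_adj x hx y hy hxy := by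
    obtain rfl | hxa := hx
    · exact .inr rfl
    have hyu : y ≠ u := fun h => hy (.inl h)
    by_cases hyS : y ∈ S
    · have hya := (ReachableIn.of_adj (A := S \ {u}) ⟨hyS, hyu⟩ hxa.left_mem hxy.symm).trans hxa
      exact absurd (.inr hya) hy
    rcases hS.eq_or_eq_of_adj x hxa.left_mem.1 y hyS hxy with rfl | rfl
    · exact .inl rfl
    · exact absurd hxa (hS.not_reachableIn_of_not_connected hG hu hcut)

lemma petal_union_petal (hG : IsTwoConnected G) (hS : IsSide G a b S) (hu : u ∈ S) :
    petal G S u a ∪ petal G S u b = S := by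
  refine subset_antisymm (Set.union_subset ?_ ?_) fun x hx => ?_
  · exact Set.insert_subset hu fun x hx => hx.left_mem.1
  · exact Set.insert_subset hu fun x hx => hx.left_mem.1
  obtain rfl | hxu := eq_or_ne x u
  · exact .inl (Set.mem_insert _ _)
  exact (hS.reachableIn_diff hG hu hx hxu).imp (Set.mem_insert_of_mem _) (Set.mem_insert_of_mem _)

lemma petal_inter_petal (hG : IsTwoConnected G) (hS : IsSide G a b S) (hu : u ∈ S)
    (hcut : ¬ (G.induce (S \ {u})).Connected) : petal G S u a ∩ petal G S u b = {u} := by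
  refine subset_antisymm (fun x ⟨hxa, hxb⟩ => ?_) (by simp [petal])
  obtain rfl | hxa := hxa
  · rfl
  obtain rfl | hxb := hxb
  · rfl
  exact absurd (hxb.symm.trans hxa) (hS.not_reachableIn_of_not_connected hG hu hcut)

lemma edgesIn_subset_petal_union_petal (hG : IsTwoConnected G) (hS : IsSide G a b S)
    (hu : u ∈ S) : edgesIn G S ⊆ edgesIn G (petal G S u a) ∪ edgesIn G (petal G S u b) := by
  conv_lhs => rw [← hS.petal_union_petal hG hu]
  refine edgesIn_union_subset fun x hx y hy hxy => ?_
  obtain rfl | hxa := hx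
  · exact .inl (Set.mem_insert _ _)
  obtain rfl | hyb := hy
  · exact .inr (Set.mem_insert _ _)
  exact .inr (.inr ((ReachableIn.of_adj hyb.left_mem hxa.left_mem hxy.symm).trans hxa))

lemma petal_ssubset (hG : IsTwoConnected G) (hS : IsSide G a b S) (hu : u ∈ S) (hub : u ≠ b)
    (hcut : ¬ (G.induce (S \ {u})).Connected) : petal G S u a ⊂ S := by
  have hsub : petal G S u a ⊆ S := Set.subset_union_left.trans_eq (hS.petal_union_petal hG hu)
  refine Set.ssubset_iff_subset_ne.2 ⟨hsub, fun h => ?_⟩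
  obtain h | h := (show b ∈ petal G S u a from h.symm ▸ hS.right_mem)
  exacts [hub h.symm, hS.not_reachableIn_of_not_connected hG hu hcut h]

variable [Finite V]

lemma two_le_ncard (hS : IsSide G a b S) : 2 ≤ S.ncard :=
  Set.ncard_pair hS.ne ▸ Set.ncard_le_ncard
    (Set.insert_subset hS.left_mem (Set.singleton_subset_iff.2 hS.right_mem))

theorem ncard_edgesIn_le (hG : IsTwoConnected G)
    (hflat : ∀ S : Set V, IsGoodFlat G S → (edgesIn G S).ncard = 2 * S.ncard - 3)
    (hS : IsSide G a b S) :
    (edgesIn G S).ncard + 3 ≤ 2 * S.ncard ∧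
      (¬ IsTwoConnected (G.induce S) → (edgesIn G S).ncard + 4 ≤ 2 * S.ncard) := by
  induction hn : S.ncard using Nat.strong_induction_on generalizing a b S with | _ n ih => ?_
  have h2 := hS.two_le_ncard
  by_cases htc : IsTwoConnected (G.induce S)
  · have := hflat S (isGoodFlat_of_isTwoConnected_induce hG htc hS.connected_compl)
    exact ⟨by omega, fun h => absurd htc h⟩
  suffices (edgesIn G S).ncard + 4 ≤ 2 * S.ncard by omega
  by_cases hcut : ∃ u ∈ S, u ≠ a ∧ u ≠ b ∧ ¬ (G.induce (S \ {u})).Connected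
  · obtain ⟨u, hu, hua, hub, hcut⟩ := hcut
    have hPa := ih _ (hn ▸ Set.ncard_lt_ncard (hS.petal_ssubset hG hu hub hcut))
      (hS.isSide_petal hG hu hua hub hcut) rfl
    have hPb := ih _ (hn ▸ Set.ncard_lt_ncard (hS.symm.petal_ssubset hG hu hua hcut))
      (hS.symm.isSide_petal hG hu hub hua hcut) rfl
    have hcard := Set.ncard_union_add_ncard_inter (petal G S u a) (petal G S u b)
    rw [hS.petal_union_petal hG hu, hS.petal_inter_petal hG hu hcut, Set.ncard_singleton] at hcard
    have hedges := (Set.ncard_le_ncard (hS.edgesIn_subset_petal_union_petal hG hu)).trans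
      (Set.ncard_union_le _ _)
    omega
  have hconn : ¬ (G.induce S).Connected := fun hconn => htc <| isTwoConnected_induce_iff.2
    ⟨hconn, fun u hu => ?_⟩
  · rw [hS.edgesIn_eq_empty hG hconn, Set.ncard_empty]
    omega
  obtain rfl | hua := eq_or_ne u a
  · exact hS.connected_induce_diff_left hG
  obtain rfl | hub := eq_or_ne u b
  · exact hS.symm.connected_induce_diff_left hG
  by_contra h
  exact hcut ⟨u, hu, hua, hub, h⟩

theorem not_adj_and_isTwoConnected (hG : IsTwoConnected G)
    (hE : G.edgeSet.ncard = 2 * (Nat.card V - 1))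
    (hflat : ∀ S : Set V, IsGoodFlat G S → (edgesIn G S).ncard = 2 * S.ncard - 3)
    {S₁ S₂ : Set V} (h₁ : IsSide G a b S₁) (h₂ : IsSide G a b S₂)
    (hcover : G.edgeSet ⊆ edgesIn G S₁ ∪ edgesIn G S₂)
    (hcard : S₁.ncard + S₂.ncard = Nat.card V + 2) :
    ¬ G.Adj a b ∧ IsTwoConnected (G.induce S₁) ∧ IsTwoConnected (G.induce S₂) := by
  obtain ⟨hS₁, hS₁'⟩ := h₁.ncard_edgesIn_le hG hflat
  obtain ⟨hS₂, hS₂'⟩ := h₂.ncard_edgesIn_le hG hflat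
  have hunion := Set.ncard_union_add_ncard_inter (edgesIn G S₁) (edgesIn G S₂)
  have hle := Set.ncard_le_ncard hcover
  have h2 := h₁.two_le_ncard
  refine ⟨fun hab => ?_, by_contra fun h => ?_, by_contra fun h => ?_⟩
  · have : 0 < (edgesIn G S₁ ∩ edgesIn G S₂).ncard := (Set.ncard_pos (Set.toFinite _)).2
      ⟨_, mem_edgesIn_mk.2 ⟨hab, h₁.left_mem, h₁.right_mem⟩,
        mem_edgesIn_mk.2 ⟨hab, h₂.left_mem, h₂.right_mem⟩⟩
    omega
  · have := hS₁' h
    omega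
  · have := hS₂' h
    omega

end IsSide

end Side

section Components

variable {V : Type*} {G : SimpleGraph V} {D : Set V}

lemma connected_induce_image_supp (c : (G.induce D).ConnectedComponent) :
    (G.induce (Subtype.val '' c.supp)).Connected :=
  Connected.induce_image_of_eq_or_adj (G := G.induce D) (G' := G) (fun _ _ h => .inr h)
    (show ((G.induce D).induce c.supp).Connected from c.connected_toSimpleGraph)

lemma mem_image_supp_of_adj {c : (G.induce D).ConnectedComponent} {x y : V}
    (hx : x ∈ Subtype.val '' c.supp) (hy : y ∈ D) (h : G.Adj x y) :
    y ∈ Subtype.val '' c.supp := by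
  obtain ⟨x, hx, rfl⟩ := hx
  exact ⟨⟨y, hy⟩, c.mem_supp_of_adj_mem_supp hx h, rfl⟩

lemma pairwise_disjoint_image_supp :
    Pairwise fun c c' : (G.induce D).ConnectedComponent =>
      Disjoint (Subtype.val '' c.supp) (Subtype.val '' c'.supp) := fun _ _ h =>
  (Set.disjoint_image_iff Subtype.val_injective).2 (pairwise_disjoint_supp_connectedComponent _ h)

variable {a b : V}

lemma isSide_compl_image_supp (hab : a ≠ b)
    (c : (G.induce {x | x ≠ a ∧ x ≠ b}).ConnectedComponent) :
    IsSide G a b (Subtype.val '' c.supp)ᶜ where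
  ne := hab
  left_mem := fun ⟨x, _, hx⟩ => x.2.1 hx
  right_mem := fun ⟨x, _, hx⟩ => x.2.2 hx
  connected_compl := by rw [compl_compl]; exact connected_induce_image_supp c
  eq_or_eq_of_adj x hx y hy hxy := by
    by_contra! h
    exact hx (mem_image_supp_of_adj (not_not.1 hy) h hxy.symm)

lemma notMem_image_supp_of_adj {c c' : (G.induce {x | x ≠ a ∧ x ≠ b}).ConnectedComponent}
    (hcc' : c ≠ c') {x y : V} (hx : x ∈ Subtype.val '' c.supp) (hxy : G.Adj x y) :
    y ∉ Subtype.val '' c'.supp := by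
  by_cases hy : y ≠ a ∧ y ≠ b
  · exact Set.disjoint_left.1 (pairwise_disjoint_image_supp hcc') (mem_image_supp_of_adj hx hy hxy)
  · rintro ⟨y, -, rfl⟩
    exact hy y.2

lemma mem_edgesIn_compl_image_supp {c c' : (G.induce {x | x ≠ a ∧ x ≠ b}).ConnectedComponent}
    (hcc' : c ≠ c') {e : Sym2 V} (he : e ∈ G.edgeSet)
    (hc : e ∉ edgesIn G (Subtype.val '' c.supp)ᶜ) : e ∈ edgesIn G (Subtype.val '' c'.supp)ᶜ := by
  induction e using Sym2.ind with | _ x y => ?_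
  simp only [mem_edgesIn_mk, Set.mem_compl_iff, not_and, not_not] at hc ⊢
  have hdisj := Set.disjoint_left.1 (pairwise_disjoint_image_supp hcc')
  by_cases hx : x ∈ Subtype.val '' c.supp
  · exact ⟨he, hdisj hx, notMem_image_supp_of_adj hcc' hx he⟩
  · have hy := hc he hx
    exact ⟨he, notMem_image_supp_of_adj hcc' hy he.symm, hdisj hy⟩

lemma reachableIn_insert_insert_image_supp (hG : IsTwoConnected G) (hab : a ≠ b)
    {c c' : (G.induce {x | x ≠ a ∧ x ≠ b}).ConnectedComponent} (hcc' : c ≠ c') :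
    ReachableIn G (insert a (insert b (Subtype.val '' c.supp))) a b := by
  have hS := isSide_compl_image_supp hab c
  obtain ⟨u, hu⟩ := c'.nonempty_supp
  have huc : (u : V) ∉ Subtype.val '' c.supp :=
    Set.disjoint_right.1 (pairwise_disjoint_image_supp hcc') ⟨u, hu, rfl⟩
  obtain ⟨wb, hwb, hbw⟩ := hS.exists_adj_compl hG huc u.2.1
  obtain ⟨wa, hwa, haw⟩ := hS.symm.exists_adj_compl hG huc u.2.2
  have hw := ((connected_induce_image_supp c).reachableIn (not_not.1 hwa) (not_not.1 hwb)).mono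
    ((Set.subset_insert b _).trans (Set.subset_insert a _))
  exact ((ReachableIn.of_adj (Set.mem_insert _ _) hw.left_mem haw).trans hw).trans
    (ReachableIn.of_adj hw.right_mem (Set.mem_insert_of_mem _ (Set.mem_insert _ _)) hbw.symm)

/-- A vertex `z` outside `{a, b}` lies in some component `c'`, and a third component `c''` still
joins `a` to `b` in `G[(V ∖ c) ∖ {z}]`. -/
lemma isGoodFlat_compl_image_supp (hG : IsTwoConnected G) (hab : a ≠ b)
    (hthird : ∀ c₁ c₂ : (G.induce {x | x ≠ a ∧ x ≠ b}).ConnectedComponent,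
      ∃ c₃, c₃ ≠ c₁ ∧ c₃ ≠ c₂)
    (c : (G.induce {x | x ≠ a ∧ x ≠ b}).ConnectedComponent) :
    IsGoodFlat G (Subtype.val '' c.supp)ᶜ := by
  have hS := isSide_compl_image_supp hab c
  have hsub {c' : (G.induce {x | x ≠ a ∧ x ≠ b}).ConnectedComponent} (h : c' ≠ c) :
      insert a (insert b (Subtype.val '' c'.supp)) ⊆ (Subtype.val '' c.supp)ᶜ :=
    Set.insert_subset hS.left_mem <| Set.insert_subset hS.right_mem <|
      Set.disjoint_left.1 (pairwise_disjoint_image_supp h)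
  refine isGoodFlat_of_isTwoConnected_induce hG
    (isTwoConnected_induce_iff.2 ⟨?_, fun z hz => ?_⟩) hS.connected_compl
  · obtain ⟨c', hc', -⟩ := hthird c c
    exact hS.connected_induce_of_reachableIn hG
      ((reachableIn_insert_insert_image_supp hG hab hc').mono (hsub hc'))
  obtain rfl | hza := eq_or_ne z a
  · exact hS.connected_induce_diff_left hG
  obtain rfl | hzb := eq_or_ne z b
  · exact hS.symm.connected_induce_diff_left hG
  obtain ⟨c'', hc, hc'⟩ :=
    hthird c ((G.induce {x | x ≠ a ∧ x ≠ b}).connectedComponentMk ⟨z, hza, hzb⟩)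
  have hzc'' : z ∉ Subtype.val '' c''.supp :=
    Set.disjoint_right.1 (pairwise_disjoint_image_supp hc') ⟨_, rfl, rfl⟩
  have hreach := (reachableIn_insert_insert_image_supp hG hab hc).mono
    (B := (Subtype.val '' c.supp)ᶜ \ {z}) (Set.subset_sdiff_singleton (hsub hc) ?_)
  · exact connected_induce_of_reachableIn_or hreach fun x hx =>
      hS.reachableIn_diff hG hz hx.1 hx.2
  rintro (h | h | h)
  exacts [hza h, hzb h, hzc'' h]

variable [Finite V]

lemma one_lt_card_connectedComponent {H : SimpleGraph V} (h : ¬ H.Preconnected) :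
    1 < Nat.card H.ConnectedComponent := by
  obtain ⟨x, y, hxy⟩ : ∃ x y, ¬ H.Reachable x y := by simpa only [Preconnected, not_forall] using h
  have : Nontrivial H.ConnectedComponent := ⟨_, _, fun h => hxy (ConnectedComponent.exact h)⟩
  exact Finite.one_lt_card

lemma finsum_ncard_image_supp :
    ∑ᶠ c : (G.induce D).ConnectedComponent, (Subtype.val '' c.supp).ncard = D.ncard := by
  rw [← Set.ncard_iUnion_of_finite (fun _ => Set.toFinite _) pairwise_disjoint_image_supp,
    ← Set.image_iUnion, iUnion_connectedComponentSupp, Set.image_univ, Subtype.range_coe]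

lemma ncard_setOf_ne_and_ne_add_two (hab : a ≠ b) :
    {x : V | x ≠ a ∧ x ≠ b}.ncard + 2 = Nat.card V := by
  have h : {x : V | x ≠ a ∧ x ≠ b} = {a, b}ᶜ := by ext; simp
  rw [h, ← Set.ncard_pair hab, add_comm, Set.ncard_add_ncard_compl]

lemma ncard_edgeSet_diff_edgesIn_compl (hE : G.edgeSet.ncard = 2 * (Nat.card V - 1))
    (hflat : ∀ S : Set V, IsGoodFlat G S → (edgesIn G S).ncard = 2 * S.ncard - 3) {H : Set V}
    (hH : IsGoodFlat G Hᶜ) (h2 : 2 ≤ Hᶜ.ncard) :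
    (G.edgeSet \ edgesIn G Hᶜ).ncard = 2 * H.ncard + 1 := by
  have h₁ := hflat _ hH
  have h₂ := Set.ncard_sdiff_add_ncard_of_subset (s := edgesIn G Hᶜ) (t := G.edgeSet)
    fun _ he => he.1
  have h₃ := Set.ncard_add_ncard_compl H
  omega

theorem card_connectedComponent_le_two (hG : IsTwoConnected G)
    (hE : G.edgeSet.ncard = 2 * (Nat.card V - 1))
    (hflat : ∀ S : Set V, IsGoodFlat G S → (edgesIn G S).ncard = 2 * S.ncard - 3)
    (hab : a ≠ b) : Nat.card (G.induce {x | x ≠ a ∧ x ≠ b}).ConnectedComponent ≤ 2 := by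
  set K := {x : V | x ≠ a ∧ x ≠ b}
  let H (c : (G.induce K).ConnectedComponent) : Set V := Subtype.val '' c.supp
  let X (c : (G.induce K).ConnectedComponent) : Set (Sym2 V) := G.edgeSet \ edgesIn G (H c)ᶜ
  by_contra! h3
  have hthird (c₁ c₂ : (G.induce K).ConnectedComponent) : ∃ c₃, c₃ ≠ c₁ ∧ c₃ ≠ c₂ := by
    by_contra! h
    have : (Set.univ : Set (G.induce K).ConnectedComponent) ⊆ {c₁, c₂} := fun c _ =>
      (em (c = c₁)).elim .inl fun h' => .inr (h c h')
    have := (Set.ncard_le_ncard this).trans (Set.ncard_insert_le c₁ {c₂})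
    rw [Set.ncard_univ, Set.ncard_singleton] at this
    omega
  have hX (c : (G.induce K).ConnectedComponent) : (X c).ncard = 2 * (H c).ncard + 1 :=
    ncard_edgeSet_diff_edgesIn_compl hE hflat (isGoodFlat_compl_image_supp hG hab hthird c)
      (isSide_compl_image_supp hab c).two_le_ncard
  have hXdisj : Pairwise (Function.onFun Disjoint X) := fun c c' hcc' =>
    Set.disjoint_left.2 fun e he he' => he'.2 (mem_edgesIn_compl_image_supp hcc' he.1 he.2)
  have hXE : ∑ᶠ c, (X c).ncard ≤ G.edgeSet.ncard := by
    rw [← Set.ncard_iUnion_of_finite (fun _ => Set.toFinite _) hXdisj]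
    exact Set.ncard_le_ncard (Set.iUnion_subset fun c => Set.sdiff_subset)
  have hH : ∑ᶠ c, (H c).ncard = K.ncard := finsum_ncard_image_supp
  have hK : K.ncard + 2 = Nat.card V := ncard_setOf_ne_and_ne_add_two hab
  have : Fintype (G.induce K).ConnectedComponent := Fintype.ofFinite _
  simp only [finsum_eq_sum_of_fintype, hX] at hH hXE
  rw [Finset.sum_add_distrib, ← Finset.mul_sum, Finset.sum_const, Finset.card_univ] at hXE
  rw [Nat.card_eq_fintype_card] at h3
  simp only [smul_eq_mul, mul_one] at hXE
  omega

theorem not_adj_and_isTwoConnected_compl_image_supp (hG : IsTwoConnected G)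
    (hE : G.edgeSet.ncard = 2 * (Nat.card V - 1))
    (hflat : ∀ S : Set V, IsGoodFlat G S → (edgesIn G S).ncard = 2 * S.ncard - 3)
    (hab : a ≠ b) {c₁ c₂ : (G.induce {x | x ≠ a ∧ x ≠ b}).ConnectedComponent} (h12 : c₁ ≠ c₂)
    (huniv : {c₁, c₂} = Set.univ) :
    ¬ G.Adj a b ∧ IsTwoConnected (G.induce (Subtype.val '' c₂.supp)ᶜ) ∧
      IsTwoConnected (G.induce (Subtype.val '' c₁.supp)ᶜ) := by
  have hsum := finsum_ncard_image_supp (G := G) (D := {x : V | x ≠ a ∧ x ≠ b})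
  rw [← finsum_mem_univ, ← huniv, finsum_mem_pair h12] at hsum
  have hcompl₁ := Set.ncard_add_ncard_compl (Subtype.val '' c₁.supp)
  have hcompl₂ := Set.ncard_add_ncard_compl (Subtype.val '' c₂.supp)
  have hK := ncard_setOf_ne_and_ne_add_two (V := V) hab
  refine (isSide_compl_image_supp hab c₂).not_adj_and_isTwoConnected hG hE hflat
    (isSide_compl_image_supp hab c₁) (fun e he => ?_) (by omega)
  by_cases h : e ∈ edgesIn G (Subtype.val '' c₁.supp)ᶜ
  exacts [.inr h, .inl (mem_edgesIn_compl_image_supp h12 he h)]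

end Components

theorem stmt19_general {V : Type*} [Fintype V] (G : SimpleGraph V)
    (h2c : IsTwoConnected G)
    (hE : G.edgeSet.ncard = 2 * (Nat.card V - 1))
    (hS : ∀ S : Set V, IsGoodFlat G S → (edgesIn G S).ncard = 2 * S.ncard - 3)
    (v₁ v₂ : V) (hne : v₁ ≠ v₂)
    (hsep : ¬ (G.induce {x : V | x ≠ v₁ ∧ x ≠ v₂}).Preconnected) :
    Nat.card (G.induce {x : V | x ≠ v₁ ∧ x ≠ v₂}).ConnectedComponent = 2 ∧
    ¬ G.Adj v₁ v₂ ∧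
    ∀ c : (G.induce {x : V | x ≠ v₁ ∧ x ≠ v₂}).ConnectedComponent,
      IsTwoConnected (G.induce {x : V | x ∉ Subtype.val '' c.supp}) := by
  have hcard := le_antisymm (card_connectedComponent_le_two h2c hE hS hne)
    (one_lt_card_connectedComponent hsep)
  obtain ⟨c₁, c₂, h12, huniv⟩ := Nat.card_eq_two_iff.1 hcard
  obtain ⟨hnadj, htc₂, htc₁⟩ :=
    not_adj_and_isTwoConnected_compl_image_supp h2c hE hS hne h12 huniv
  refine ⟨hcard, hnadj, fun c => ?_⟩
  obtain rfl | rfl : c ∈ ({c₁, c₂} : Set _) := huniv ▸ Set.mem_univ c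
  exacts [htc₁, htc₂]

theorem stmt19 {V : Type*} [Fintype V] [DecidableEq V] (G : SimpleGraph V)
    (h2c : IsTwoConnected G)
    (hE : G.edgeSet.ncard = 2 * (Nat.card V - 1))
    (hS : ∀ S : Set V, IsGoodFlat G S → (edgesIn G S).ncard = 2 * S.ncard - 3)
    (v₁ v₂ : V) (hne : v₁ ≠ v₂)
    (hsep : ¬ (G.induce {x : V | x ≠ v₁ ∧ x ≠ v₂}).Preconnected) :
    Nat.card (G.induce {x : V | x ≠ v₁ ∧ x ≠ v₂}).ConnectedComponent = 2 ∧
    ¬ G.Adj v₁ v₂ ∧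
    ∀ c : (G.induce {x : V | x ≠ v₁ ∧ x ≠ v₂}).ConnectedComponent,
      IsTwoConnected (G.induce {x : V | x ∉ Subtype.val '' c.supp}) :=
  stmt19_general G h2c hE hS v₁ v₂ hne hsep

end Gor
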